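/- For sequences under ▷_ℓ: Slow_ℓ(list(t_1,...,t_k)) = Σ_{i=1}^k Slow_ℓ(t_i), where Slow_ℓ(a) is the length of the longest ▷_ℓ-descending chain from a. -/

import Mathlib

/-- First-order terms over signature `F` and variables `V`. -/
inductive Trm (F V : Type) where
  | var : V → Trm F V
  | fn : F → List (Trm F V) → Trm F V

/-- `SSub s t` : `t` is a strict subterm of `s`. -/
inductive SSub {F V : Type} : Trm F V → Trm F V → Prop where
  | arg {f ts t} : t ∈ ts → SSub (Trm.fn f ts) t
  | trans {f ts s t} : s ∈ ts → SSub s t → SSub (Trm.fn f ts) t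

/-- Reflexive closure of a relation, used for product extensions. -/
def EqOr {α : Type} (r : α → α → Prop) (a b : α) : Prop := a = b ∨ r a b

/-- Product extension of a relation on lists: componentwise equal-or-smaller,
with at least one component strictly smaller. -/
def ProdExtL {α : Type} (r : α → α → Prop) (xs ys : List α) : Prop :=
  List.Forall₂ (EqOr r) xs ys ∧
    ∃ i, ∃ (h₁ : i < xs.length) (h₂ : i < ys.length), r xs[i] ys[i]

/-- Elements compared by `▷_ℓ`: terms (inl) or sequences of terms (inr). -/
abbrev TS (F V : Type) := Trm F V ⊕ List (Trm F V)

/-- Identification of a term with the singleton sequence. -/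
def toL {F V : Type} : TS F V → List (Trm F V) := Sum.elim (fun t => [t]) id

mutual
  /-- The auxiliary order `▷_ℓ` (Definition of `poel`) on terms and sequences,
  induced by a precedence `prec` and the width bound `ℓ`. -/
  inductive Poel {F V : Type} (prec : F → F → Prop) (ℓ : ℕ) : TS F V → TS F V → Prop where
    /- clause (1): precedence descent to strict subterms, width at most ℓ -/
    | ia {f g : F} {ss ts : List (Trm F V)} :
        prec f g → (∀ t ∈ ts, SSub (Trm.fn f ss) t) → ts.length ≤ ℓ →
        Poel prec ℓ (Sum.inl (Trm.fn f ss)) (Sum.inl (Trm.fn g ts))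
    /- clause (2): same symbol, product extension of the strict-subterm order -/
    | tsc {f : F} {ss ts : List (Trm F V)} :
        ProdExtL SSub ss ts →
        Poel prec ℓ (Sum.inl (Trm.fn f ss)) (Sum.inl (Trm.fn f ts))
    /- clause (3): descent from a term to a sequence of at most ℓ smaller terms -/
    | ialst {f : F} {ss ts : List (Trm F V)} :
        (∀ t ∈ ts, Poel prec ℓ (Sum.inl (Trm.fn f ss)) (Sum.inl t)) → ts.length ≤ ℓ →
        Poel prec ℓ (Sum.inl (Trm.fn f ss)) (Sum.inr ts)
    /- clause (4): sequences, splitting `ts = b₁ ++ ⋯ ++ b_k` with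
       `⟨s₁,…,s_k⟩` greater than `⟨b₁,…,b_k⟩` in the product extension of `▷_ℓ` -/
    | ms {ss ts : List (Trm F V)} (bs : List (TS F V)) :
        ts = (bs.map toL).flatten →
        PoelProd prec ℓ (ss.map Sum.inl) bs →
        Poel prec ℓ (Sum.inr ss) (Sum.inr ts)

  /-- Product extension of `▷_ℓ`: componentwise equal-or-smaller with at
  least one strict decrease. -/
  inductive PoelProd {F V : Type} (prec : F → F → Prop) (ℓ : ℕ) :
      List (TS F V) → List (TS F V) → Prop where
    | strict {a b as bs} : Poel prec ℓ a b → PoelGE prec ℓ as bs →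
        PoelProd prec ℓ (a :: as) (b :: bs)
    | cons_eq {a as bs} : PoelProd prec ℓ as bs → PoelProd prec ℓ (a :: as) (a :: bs)
    | cons_lt {a b as bs} : Poel prec ℓ a b → PoelProd prec ℓ as bs →
        PoelProd prec ℓ (a :: as) (b :: bs)

  /-- Componentwise equal-or-smaller (w.r.t. `▷_ℓ`) lists of equal length. -/
  inductive PoelGE {F V : Type} (prec : F → F → Prop) (ℓ : ℕ) :
      List (TS F V) → List (TS F V) → Prop where
    | nil : PoelGE prec ℓ [] []
    | cons_eq {a as bs} : PoelGE prec ℓ as bs → PoelGE prec ℓ (a :: as) (a :: bs)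
    | cons_lt {a b as bs} : Poel prec ℓ a b → PoelGE prec ℓ as bs →
        PoelGE prec ℓ (a :: as) (b :: bs)
end


/-- `DescChain r a L` : `L` is a strictly `r`-descending chain starting from `a`. -/
def DescChain {α : Type} (r : α → α → Prop) : α → List α → Prop
  | _, [] => True
  | a, b :: l => r a b ∧ DescChain r b l

/-- `slow` assigns to each element the length of the longest `r`-descending
chain starting from it. -/
def IsMaxChainLen {α : Type} (r : α → α → Prop) (slow : α → ℕ) : Prop :=
  ∀ a, (∃ L, DescChain r a L ∧ L.length = slow a) ∧ (∀ L, DescChain r a L → L.length ≤ slow a)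

/-! Concatenation is compatible with `▷_ℓ`, so maximal chains from `t₁, …, t_k` can be run one
after the other inside `⟨t₁, …, t_k⟩`; this gives `Σᵢ Slow_ℓ(tᵢ) ≤ Slow_ℓ(⟨t₁, …, t_k⟩)`.
Conversely, by this inequality the weight `Σᵢ Slow_ℓ(tᵢ)` of a sequence (a term counting as a
singleton) strictly decreases along every `▷_ℓ`-step: in the splitting clause each member `sᵢ`
is replaced by a block `bᵢ` of weight at most `Slow_ℓ(bᵢ) < Slow_ℓ(sᵢ)`. Hence no chain from
`⟨t₁, …, t_k⟩` is longer than its weight. -/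

namespace DescChain

variable {α β : Type} {r : α → α → Prop}

theorem map {s : β → β → Prop} {f : α → β} (hf : ∀ a b, r a b → s (f a) (f b)) :
    ∀ {a : α} {L : List α}, DescChain r a L → DescChain s (f a) (L.map f)
  | _, [], _ => trivial
  | _, _ :: _, ⟨hab, hL⟩ => ⟨hf _ _ hab, map hf hL⟩

theorem length_le_of_rel_lt {φ : α → ℕ} (hφ : ∀ a b, r a b → φ b < φ a) :
    ∀ {a : α} {L : List α}, DescChain r a L → L.length ≤ φ a
  | _, [], _ => Nat.zero_le _
  | a, b :: _, ⟨hab, hL⟩ => by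
    have := length_le_of_rel_lt hφ hL
    have := hφ a b hab
    simp only [List.length_cons]
    omega

end DescChain

theorem IsMaxChainLen.lt_of_rel {α : Type} {r : α → α → Prop} {slow : α → ℕ}
    (hslow : IsMaxChainLen r slow) {a b : α} (hab : r a b) : slow b < slow a := by
  obtain ⟨L, hL, hlen⟩ := (hslow b).1
  have := (hslow a).2 (b :: L) ⟨hab, hL⟩
  simp only [List.length_cons, hlen] at this
  omega

variable {F V : Type} {prec : F → F → Prop} {ℓ : ℕ}

theorem PoelGE.refl : ∀ as : List (TS F V), PoelGE prec ℓ as as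
  | [] => .nil
  | _ :: as => .cons_eq (refl as)

theorem PoelGE.append : ∀ {as bs cs ds : List (TS F V)}, PoelGE prec ℓ as bs →
    PoelGE prec ℓ cs ds → PoelGE prec ℓ (as ++ cs) (bs ++ ds)
  | _, _, _, _, .nil, hcd => hcd
  | _, _, _, _, .cons_eq h, hcd => .cons_eq (h.append hcd)
  | _, _, _, _, .cons_lt hab h, hcd => .cons_lt hab (h.append hcd)

theorem PoelProd.append_right (cs : List (TS F V)) :
    ∀ {as bs : List (TS F V)}, PoelProd prec ℓ as bs → PoelProd prec ℓ (as ++ cs) (bs ++ cs)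
  | _, _, .strict hab h => .strict hab (h.append (PoelGE.refl cs))
  | _, _, .cons_eq h => .cons_eq (h.append_right cs)
  | _, _, .cons_lt hab h => .cons_lt hab (h.append_right cs)

theorem PoelProd.append_left {as bs : List (TS F V)} (h : PoelProd prec ℓ as bs) :
    ∀ cs : List (TS F V), PoelProd prec ℓ (cs ++ as) (cs ++ bs)
  | [] => h
  | _ :: cs => .cons_eq (h.append_left cs)

@[simp] theorem List.flatten_map_singleton {α : Type} (l : List α) :
    (l.map fun a => [a]).flatten = l := by
  induction l <;> simp_all

@[simp] theorem toL_inl (t : Trm F V) : toL (Sum.inl t) = [t] := rfl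

@[simp] theorem toL_inr (ts : List (Trm F V)) : toL (Sum.inr ts) = ts := rfl

theorem Poel.inr_toL : ∀ {a b : TS F V}, Poel prec ℓ a b →
    Poel prec ℓ (Sum.inr (toL a)) (Sum.inr (toL b))
  | .inl _, b, h => .ms [b] (by simp) (.strict h .nil)
  | .inr _, _, .ms bs e p => .ms bs e p

theorem Poel.embed {a b : TS F V} (h : Poel prec ℓ a b) (us vs : List (Trm F V)) :
    Poel prec ℓ (Sum.inr (us ++ toL a ++ vs)) (Sum.inr (us ++ toL b ++ vs)) := by
  cases h.inr_toL with
  | ms bs e p =>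
    refine .ms (us.map Sum.inl ++ bs ++ vs.map Sum.inl) ?_ ?_
    · simp [e, Function.comp_def]
    · simpa using (p.append_right _).append_left _

section Weight

variable {φ : TS F V → ℕ}

theorem PoelGE.sum_map_le : ∀ {as bs : List (TS F V)}, PoelGE prec ℓ as bs →
    (∀ a ∈ as, ∀ b, Poel prec ℓ a b → φ b < φ a) → (bs.map φ).sum ≤ (as.map φ).sum
  | _, _, .nil, _ => le_rfl
  | _, _, .cons_eq h, hφ => by
    simpa using h.sum_map_le fun a ha => hφ a (List.mem_cons_of_mem _ ha)
  | _, _, .cons_lt hab h, hφ => by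
    have := h.sum_map_le fun a ha => hφ a (List.mem_cons_of_mem _ ha)
    have := hφ _ List.mem_cons_self _ hab
    simp only [List.map_cons, List.sum_cons]
    omega

theorem PoelProd.sum_map_lt : ∀ {as bs : List (TS F V)}, PoelProd prec ℓ as bs →
    (∀ a ∈ as, ∀ b, Poel prec ℓ a b → φ b < φ a) → (bs.map φ).sum < (as.map φ).sum
  | _, _, .strict hab h, hφ => by
    have := h.sum_map_le fun a ha => hφ a (List.mem_cons_of_mem _ ha)
    have := hφ _ List.mem_cons_self _ hab
    simp only [List.map_cons, List.sum_cons]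
    omega
  | _, _, .cons_eq h, hφ => by
    simpa using h.sum_map_lt fun a ha => hφ a (List.mem_cons_of_mem _ ha)
  | _, _, .cons_lt hab h, hφ => by
    have := h.sum_map_lt fun a ha => hφ a (List.mem_cons_of_mem _ ha)
    have := hφ _ List.mem_cons_self _ hab
    simp only [List.map_cons, List.sum_cons]
    omega

end Weight

section Slow

variable {Slow : TS F V → ℕ}

theorem exists_descChain_toL_append (hSlow : IsMaxChainLen (Poel prec ℓ) Slow)
    (vs : List (Trm F V)) : ∀ {a : TS F V} {L : List (TS F V)}, DescChain (Poel prec ℓ) a L →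
    ∃ N, DescChain (Poel prec ℓ) (Sum.inr (toL a ++ vs)) N ∧
      N.length = L.length + Slow (Sum.inr vs)
  | a, [], _ => by
    obtain ⟨M, hM, hlen⟩ := (hSlow (Sum.inr vs)).1
    refine ⟨M.map fun b => Sum.inr (toL a ++ toL b), ?_, by simp [hlen]⟩
    exact hM.map fun b c hbc => by simpa using hbc.embed (toL a) []
  | a, b :: _, ⟨hab, hL⟩ => by
    obtain ⟨N, hN, hlen⟩ := exists_descChain_toL_append hSlow vs hL
    exact ⟨_ :: N, ⟨by simpa using hab.embed [] vs, hN⟩, by simp [hlen]; omega⟩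

theorem slow_add_slow_le (hSlow : IsMaxChainLen (Poel prec ℓ) Slow) (a : TS F V)
    (vs : List (Trm F V)) : Slow a + Slow (Sum.inr vs) ≤ Slow (Sum.inr (toL a ++ vs)) := by
  obtain ⟨L, hL, hlen⟩ := (hSlow a).1
  obtain ⟨N, hN, hNlen⟩ := exists_descChain_toL_append hSlow vs hL
  rw [← hlen, ← hNlen]
  exact (hSlow _).2 N hN

theorem sum_slow_le_slow_inr (hSlow : IsMaxChainLen (Poel prec ℓ) Slow) :
    ∀ ts : List (Trm F V), (ts.map fun t => Slow (Sum.inl t)).sum ≤ Slow (Sum.inr ts)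
  | [] => Nat.zero_le _
  | t :: ts => by
    have := sum_slow_le_slow_inr hSlow ts
    have := slow_add_slow_le hSlow (Sum.inl t) ts
    rw [toL_inl, List.singleton_append] at this
    simp only [List.map_cons, List.sum_cons]
    omega

variable (Slow) in
def seqWeight (b : TS F V) : ℕ :=
  ((toL b).map fun t => Slow (Sum.inl t)).sum

theorem seqWeight_le_slow (hSlow : IsMaxChainLen (Poel prec ℓ) Slow) :
    ∀ b : TS F V, seqWeight Slow b ≤ Slow b
  | .inl _ => by simp [seqWeight]
  | .inr ts => sum_slow_le_slow_inr hSlow ts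

theorem seqWeight_lt_of_poel_inl (hSlow : IsMaxChainLen (Poel prec ℓ) Slow) {t : Trm F V}
    {b : TS F V} (h : Poel prec ℓ (Sum.inl t) b) : seqWeight Slow b < seqWeight Slow (.inl t) :=
  calc seqWeight Slow b ≤ Slow b := seqWeight_le_slow hSlow b
    _ < Slow (.inl t) := hSlow.lt_of_rel h
    _ = seqWeight Slow (.inl t) := by simp [seqWeight]

theorem seqWeight_lt_of_poel (hSlow : IsMaxChainLen (Poel prec ℓ) Slow) :
    ∀ a b : TS F V, Poel prec ℓ a b → seqWeight Slow b < seqWeight Slow a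
  | .inl _, _, h => seqWeight_lt_of_poel_inl hSlow h
  | .inr ss, _, .ms bs e p => by
    have hlt := p.sum_map_lt (φ := seqWeight Slow) <| by
      simp only [List.mem_map]
      rintro _ ⟨t, -, rfl⟩ b h
      exact seqWeight_lt_of_poel_inl hSlow h
    unfold seqWeight at hlt ⊢
    simpa [e, List.map_flatten, List.sum_flatten, Function.comp_def] using hlt

end Slow


/-- `Slow_ℓ` of a sequence is the sum of `Slow_ℓ` of its members:
`Slow_ℓ(list(t₁,…,t_k)) = Σᵢ Slow_ℓ(tᵢ)`. -/
theorem slow_seq_eq_sum {F V : Type} [Finite F] (prec : F → F → Prop)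
    (hirr : ∀ f, ¬ prec f f) (htrans : ∀ f g h, prec f g → prec g h → prec f h)
    (ℓ : ℕ) (hℓ : 1 ≤ ℓ)
    (Slow : TS F V → ℕ) (hSlow : IsMaxChainLen (Poel prec ℓ) Slow)
    (ts : List (Trm F V)) :
    Slow (Sum.inr ts) = (ts.map (fun t => Slow (Sum.inl t))).sum := by
  refine le_antisymm ?_ (sum_slow_le_slow_inr hSlow ts)
  obtain ⟨L, hL, hlen⟩ := (hSlow (Sum.inr ts)).1
  rw [← hlen]
  exact hL.length_le_of_rel_lt (seqWeight_lt_of_poel hSlow)
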